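/- arXiv:2205.08295 — 2 statements merged into one kernel-verified Lean document; each statement's English description precedes it below -/
import Mathlib

section
/- Consider the multi-user deterministic setup: integers d, n ≥ 1, a real λ > 0, real numbers l_{jk} (1 ≤ j,k ≤ n) with l_{kk} > 0 for all k; for each user k a finite index set T_k and, for each τ ∈ T_k, vectors b_{k,τ}, b̄_{k,τ} ∈ ℝ^d, reals ν_{k,τ}, η_{k,τ}, and a symmetric positive semidefinite matrix E_{k,τ} ∈ ℝ^{d×d}; and vectors μ_1,…,μ_n ∈ ℝ^d. Define X_{k,τ} = b_{k,τ} − b̄_{k,τ}, r_{k,τ} = ν_{k,τ} + b_{k,τ}ᵀ μ_k + η_{k,τ}, B_k = Σ_{τ∈T_k}(X_{k,τ} X_{k,τ}ᵀ + E_{k,τ}) + λ l_{kk} I_d, μ̄_k = B_k^{-1} Σ_{τ∈T_k} 2 X_{k,τ} r_{k,τ}, A_k = (Σ_{τ∈T_k}(X_{k,τ} X_{k,τ}ᵀ − E_{k,τ})) μ_k + Σ_{τ∈T_k} 2 X_{k,τ}(ν_{k,τ} + b̄_{k,τ}ᵀ μ_k). Fix a user j such that Σ_{k≠j} l_{jk}²/(l_{jj}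 l_{kk}) ≤ 1, and set μ̂_j = μ̄_j − λ B_j^{-1} Σ_{k≠j} l_{jk} μ̄_k and Γ_j = B_j + λ² Σ_{k≠j} l_{jk}² B_k^{-1}. Define C₁ = ‖λ Σ_{k=1}^n l_{jk} μ_k‖_{B_j^{-1}}, C₂ = ‖λ² Σ_{k≠j} l_{jk} l_{kk} B_k^{-1} μ_k‖_{B_j^{-1}}, C₃ = ‖Σ_{τ∈T_j} 2 X_{j,τ} η_{j,τ}‖_{B_j^{-1}}, C₄ = ‖λ Σ_{k≠j} l_{jk} B_k^{-1} Σ_{τ∈T_k} 2 X_{k,τ} η_{k,τ}‖_{B_j^{-1}}, C₅ = ‖A_j‖_{B_j^{-1}}, and C₆ = ‖λ Σ_{k≠j} l_{jk} B_k^{-1} A_k‖_{B_j^{-1}}. Then for every x ∈ ℝ^d, |xᵀ(μ̂_j − μ_j)| ≤ √2 · ‖x‖_{Γ_j^{-1}} · (C₁ + C₂ + C₃ + C₄ + C₅ + C₆). -/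
/-!
Expanding `r_{k,τ}` gives `Σ_τ 2 r_{k,τ} X_{k,τ} = A_k + (B_k - λ l_kk I) μ_k + S_k` with the noise
term `S_k = Σ_τ 2 η_{k,τ} X_{k,τ}`, so `μ̄_k = μ_k + B_k⁻¹ (A_k + S_k - λ l_kk μ_k)` and
`μ̂_j - μ_j = B_j⁻¹ W` for a signed sum `W` of the six vectors whose `B_j⁻¹`-norms are `C₁, …, C₆`.
Cauchy–Schwarz and the triangle inequality for the semi-inner product `(u, v) ↦ uᵀ B_j⁻¹ v` bound
`|xᵀ (μ̂_j - μ_j)|` by `‖x‖_{B_j⁻¹} (C₁ + ⋯ + C₆)`. Finally `B_k ⪰ λ l_kk I` gives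
`B_k⁻¹ ⪯ (λ l_kk)⁻¹ I`, so the condition on the `l_jk` yields `Γ_j ⪯ 2 B_j`, hence
`B_j⁻¹ ⪯ 2 Γ_j⁻¹`.
-/

open Matrix Finset

namespace Matrix

variable {n : Type*} [Fintype n]

lemma PosSemidef.exists_dotProduct_mulVec_eq_inner {P : Matrix n n ℝ} (hP : P.PosSemidef) :
    ∃ f : (n → ℝ) →ₗ[ℝ] EuclideanSpace ℝ n, ∀ x y, x ⬝ᵥ P *ᵥ y = inner ℝ (f x) (f y) := by
  classical
  obtain ⟨S, rfl⟩ : ∃ S : Matrix n n ℝ, P = star S * S := by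
    open scoped MatrixOrder in
    exact CStarAlgebra.nonneg_iff_eq_star_mul_self.mp hP.nonneg
  refine ⟨(WithLp.linearEquiv 2 ℝ (n → ℝ)).symm.toLinearMap ∘ₗ S.mulVecLin, fun x y => ?_⟩
  simp [EuclideanSpace.inner_eq_star_dotProduct, ← mulVec_mulVec, dotProduct_mulVec,
    star_eq_conjTranspose, vecMul_transpose, dotProduct_comm]

namespace PosSemidef

variable {P : Matrix n n ℝ} (hP : P.PosSemidef)
include hP

lemma abs_dotProduct_mulVec_le (x y : n → ℝ) :
    |x ⬝ᵥ P *ᵥ y| ≤ √(x ⬝ᵥ P *ᵥ x) * √(y ⬝ᵥ P *ᵥ y) := by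
  obtain ⟨f, hf⟩ := hP.exists_dotProduct_mulVec_eq_inner
  simpa only [hf, real_inner_self_eq_norm_sq, Real.sqrt_sq (norm_nonneg _)]
    using abs_real_inner_le_norm (f x) (f y)

lemma sqrt_dotProduct_mulVec_add_le (x y : n → ℝ) :
    √((x + y) ⬝ᵥ P *ᵥ (x + y)) ≤ √(x ⬝ᵥ P *ᵥ x) + √(y ⬝ᵥ P *ᵥ y) := by
  obtain ⟨f, hf⟩ := hP.exists_dotProduct_mulVec_eq_inner
  simpa only [hf, real_inner_self_eq_norm_sq, Real.sqrt_sq (norm_nonneg _), map_add]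
    using norm_add_le (f x) (f y)

lemma sqrt_dotProduct_mulVec_sub_le (x y : n → ℝ) :
    √((x - y) ⬝ᵥ P *ᵥ (x - y)) ≤ √(x ⬝ᵥ P *ᵥ x) + √(y ⬝ᵥ P *ᵥ y) := by
  obtain ⟨f, hf⟩ := hP.exists_dotProduct_mulVec_eq_inner
  simpa only [hf, real_inner_self_eq_norm_sq, Real.sqrt_sq (norm_nonneg _), map_sub]
    using norm_sub_le (f x) (f y)

end PosSemidef

lemma PosDef.dotProduct_inv_mulVec_le [DecidableEq n] {M N : Matrix n n ℝ} (hM : M.PosDef)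
    (hN : N.PosDef) (hMN : ∀ z, z ⬝ᵥ M *ᵥ z ≤ z ⬝ᵥ N *ᵥ z) (x : n → ℝ) :
    x ⬝ᵥ N⁻¹ *ᵥ x ≤ x ⬝ᵥ M⁻¹ *ᵥ x := by
  obtain ⟨f, hf⟩ := hM.posSemidef.exists_dotProduct_mulVec_eq_inner
  set y := N⁻¹ *ᵥ x
  set w := M⁻¹ *ᵥ x
  have hNy : N *ᵥ y = x := by simp [y, mulVec_mulVec, mul_nonsing_inv _ hN.det_pos.ne'.isUnit]
  have hMw : M *ᵥ w = x := by simp [w, mulVec_mulVec, mul_nonsing_inv _ hM.det_pos.ne'.isUnit]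
  -- expand `0 ≤ (y - w)ᵀ M (y - w)`, using `yᵀMy ≤ yᵀNy = xᵀy`, `yᵀMw = xᵀy`, `wᵀMw = xᵀw`
  have hyy : ‖f y‖ ^ 2 ≤ x ⬝ᵥ y := by
    rw [← real_inner_self_eq_norm_sq, ← hf]
    simpa only [hNy, dotProduct_comm y x] using hMN y
  have hyw : inner ℝ (f y) (f w) = x ⬝ᵥ y := by rw [← hf, hMw, dotProduct_comm]
  have hww : ‖f w‖ ^ 2 = x ⬝ᵥ w := by rw [← real_inner_self_eq_norm_sq, ← hf, hMw, dotProduct_comm]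
  nlinarith [norm_sub_sq_real (f y) (f w), sq_nonneg ‖f y - f w‖]

lemma PosDef.dotProduct_inv_mulVec_le_inv_mul [DecidableEq n] {N : Matrix n n ℝ} (hN : N.PosDef)
    {c : ℝ} (hc : 0 < c) (hcN : ∀ z, c * (z ⬝ᵥ z) ≤ z ⬝ᵥ N *ᵥ z) (x : n → ℝ) :
    x ⬝ᵥ N⁻¹ *ᵥ x ≤ c⁻¹ * (x ⬝ᵥ x) := by
  have hcinv : (c • (1 : Matrix n n ℝ))⁻¹ = c⁻¹ • 1 :=
    inv_eq_right_inv (by rw [smul_mul_smul_comm, mul_inv_cancel₀ hc.ne', one_mul, one_smul])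
  simpa [hcinv, smul_mulVec, dotProduct_smul] using
    (PosDef.one.smul hc).dotProduct_inv_mulVec_le hN (by simpa [smul_mulVec, dotProduct_smul]) x

lemma PosSemidef.mul_dotProduct_le_dotProduct_add_smul_one_mulVec [DecidableEq n]
    {Q : Matrix n n ℝ} (hQ : Q.PosSemidef) (c : ℝ) (z : n → ℝ) :
    c * (z ⬝ᵥ z) ≤ z ⬝ᵥ (Q + c • 1) *ᵥ z := by
  simpa [add_mulVec, smul_mulVec, dotProduct_smul] using hQ.dotProduct_mulVec_nonneg z

lemma dotProduct_sum_smul_inv_mulVec_le [DecidableEq n] {κ : Type*} {s : Finset κ}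
    {N : κ → Matrix n n ℝ} {c : κ → ℝ} (hN : ∀ k ∈ s, (N k).PosDef) (hc : ∀ k ∈ s, 0 < c k)
    (hcN : ∀ k ∈ s, ∀ z, c k * (z ⬝ᵥ z) ≤ z ⬝ᵥ N k *ᵥ z) {a : κ → ℝ} (ha : ∀ k ∈ s, 0 ≤ a k)
    (z : n → ℝ) :
    z ⬝ᵥ (∑ k ∈ s, a k • (N k)⁻¹) *ᵥ z ≤ (∑ k ∈ s, a k / c k) * (z ⬝ᵥ z) := by
  simp only [sum_mulVec, dotProduct_sum, smul_mulVec, dotProduct_smul, smul_eq_mul, sum_mul]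
  refine sum_le_sum fun k hk => ?_
  rw [div_eq_mul_inv, mul_assoc]
  exact mul_le_mul_of_nonneg_left
    ((hN k hk).dotProduct_inv_mulVec_le_inv_mul (hc k hk) (hcN k hk) z) (ha k hk)

lemma PosDef.sqrt_dotProduct_inv_mulVec_le [DecidableEq n] {M N : Matrix n n ℝ} (hM : M.PosDef)
    (hN : N.PosDef) {c : ℝ} (hc : 0 < c) (hMN : ∀ z, z ⬝ᵥ M *ᵥ z ≤ c * (z ⬝ᵥ N *ᵥ z))
    (x : n → ℝ) : √(x ⬝ᵥ N⁻¹ *ᵥ x) ≤ √c * √(x ⬝ᵥ M⁻¹ *ᵥ x) := by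
  have hcN : (c • N)⁻¹ = c⁻¹ • N⁻¹ := inv_smul' N (Units.mk0 c hc.ne') hN.det_pos.ne'.isUnit
  have h := hM.dotProduct_inv_mulVec_le (hN.smul hc) (by simpa [smul_mulVec, dotProduct_smul]) x
  rw [hcN, smul_mulVec, dotProduct_smul, smul_eq_mul, inv_mul_le_iff₀ hc] at h
  rw [← Real.sqrt_mul hc.le]
  exact Real.sqrt_le_sqrt h

lemma dotProduct_add_smul_sum_inv_mulVec_le [DecidableEq n] {κ : Type*} {s : Finset κ}
    {B₀ : Matrix n n ℝ} {c₀ : ℝ} (hB₀ : ∀ z, c₀ * (z ⬝ᵥ z) ≤ z ⬝ᵥ B₀ *ᵥ z)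
    {N : κ → Matrix n n ℝ} {c : κ → ℝ} (hN : ∀ k ∈ s, (N k).PosDef) (hc : ∀ k ∈ s, 0 < c k)
    (hcN : ∀ k ∈ s, ∀ z, c k * (z ⬝ᵥ z) ≤ z ⬝ᵥ N k *ᵥ z) {a : κ → ℝ} (ha : ∀ k ∈ s, 0 ≤ a k)
    {t : ℝ} (ht : 0 ≤ t) (htac : t * ∑ k ∈ s, a k / c k ≤ c₀) (z : n → ℝ) :
    z ⬝ᵥ (B₀ + t • ∑ k ∈ s, a k • (N k)⁻¹) *ᵥ z ≤ 2 * (z ⬝ᵥ B₀ *ᵥ z) := by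
  have hsum := dotProduct_sum_smul_inv_mulVec_le hN hc hcN ha z
  have hzz : 0 ≤ z ⬝ᵥ z := by simpa using dotProduct_star_self_nonneg z
  rw [add_mulVec, dotProduct_add, smul_mulVec, dotProduct_smul, smul_eq_mul]
  nlinarith [mul_le_mul_of_nonneg_left hsum ht, mul_le_mul_of_nonneg_right htac hzz, hB₀ z]

end Matrix

lemma posSemidef_sum_vecMulVec_add {n ι : Type*} [Fintype n] (T : Finset ι) (X : ι → n → ℝ)
    {E : ι → Matrix n n ℝ} (hE : ∀ τ, (E τ).PosSemidef) :
    (∑ τ ∈ T, (vecMulVec (X τ) (X τ) + E τ)).PosSemidef :=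
  posSemidef_sum T fun τ _ => by
    simpa using (posSemidef_vecMulVec_self_star (X τ)).add (hE τ)

lemma sum_two_mul_smul_eq {n ι : Type*} [Fintype n] (T : Finset ι) {X b bbar : ι → n → ℝ}
    (hX : ∀ τ, X τ = b τ - bbar τ) (ν η : ι → ℝ) (E : ι → Matrix n n ℝ) (μ : n → ℝ) :
    ∑ τ ∈ T, (2 * (ν τ + b τ ⬝ᵥ μ + η τ)) • X τ =
      ((∑ τ ∈ T, (vecMulVec (X τ) (X τ) - E τ)) *ᵥ μ +
        ∑ τ ∈ T, (2 * (ν τ + bbar τ ⬝ᵥ μ)) • X τ) +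
      (∑ τ ∈ T, (vecMulVec (X τ) (X τ) + E τ)) *ᵥ μ + ∑ τ ∈ T, (2 * η τ) • X τ := by
  simp only [sum_mulVec, ← sum_add_distrib]
  refine sum_congr rfl fun τ _ => ?_
  have hb : b τ = X τ + bbar τ := by rw [hX]; abel
  rw [hb, add_dotProduct, add_mulVec, sub_mulVec, vecMulVec_mulVec]
  simp only [op_smul_eq_smul]
  module

lemma inv_mulVec_sum_smul_eq {n ι : Type*} [Fintype n] [DecidableEq n] (T : Finset ι)
    {X b bbar : ι → n → ℝ} (hX : ∀ τ, X τ = b τ - bbar τ) (ν η : ι → ℝ) (E : ι → Matrix n n ℝ)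
    (μ : n → ℝ) {c : ℝ} {B : Matrix n n ℝ}
    (hB : B = ∑ τ ∈ T, (vecMulVec (X τ) (X τ) + E τ) + c • 1) (hBdet : IsUnit B.det) :
    B⁻¹ *ᵥ ∑ τ ∈ T, (2 * (ν τ + b τ ⬝ᵥ μ + η τ)) • X τ =
      μ + B⁻¹ *ᵥ (((∑ τ ∈ T, (vecMulVec (X τ) (X τ) - E τ)) *ᵥ μ +
        ∑ τ ∈ T, (2 * (ν τ + bbar τ ⬝ᵥ μ)) • X τ) + ∑ τ ∈ T, (2 * η τ) • X τ - c • μ) := by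
  have hQμ : (∑ τ ∈ T, (vecMulVec (X τ) (X τ) + E τ)) *ᵥ μ = B *ᵥ μ - c • μ := by
    rw [hB, add_mulVec, smul_mulVec, one_mulVec, add_sub_cancel_right]
  simp only [sum_two_mul_smul_eq T hX ν η E μ, hQμ, mulVec_add, mulVec_sub, mulVec_mulVec,
    nonsing_inv_mul _ hBdet, one_mulVec]
  abel

lemma sub_smul_inv_mulVec_sum_sub_eq {n κ : Type*} [Fintype n] [DecidableEq n] [Fintype κ]
    [DecidableEq κ] (B : κ → Matrix n n ℝ) {μ mubar a e : κ → n → ℝ} (lam : ℝ) (l : κ → κ → ℝ)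
    (hmubar : ∀ k, mubar k = μ k + (B k)⁻¹ *ᵥ (a k + e k - (lam * l k k) • μ k)) (j : κ) :
    mubar j - lam • (B j)⁻¹ *ᵥ ∑ k ∈ univ.erase j, l j k • mubar k - μ j =
      (B j)⁻¹ *ᵥ (a j + e j - lam • ∑ k, l j k • μ k
        + lam ^ 2 • ∑ k ∈ univ.erase j, (l j k * l k k) • (B k)⁻¹ *ᵥ μ k
        - lam • ∑ k ∈ univ.erase j, l j k • (B k)⁻¹ *ᵥ e k
        - lam • ∑ k ∈ univ.erase j, l j k • (B k)⁻¹ *ᵥ a k) := by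
  have hlam : ∑ k ∈ univ.erase j, (l j k * (lam * l k k)) • (B k)⁻¹ *ᵥ μ k
      = lam • ∑ k ∈ univ.erase j, (l j k * l k k) • (B k)⁻¹ *ᵥ μ k := by
    rw [smul_sum]
    exact sum_congr rfl fun k _ => by rw [smul_smul, mul_left_comm]
  rw [hmubar j, ← add_sum_erase _ _ (mem_univ j)]
  simp only [hmubar, mulVec_add, mulVec_sub, mulVec_smul, smul_add, smul_sub, sum_add_distrib,
    sum_sub_distrib, smul_smul, hlam]
  module

lemma sqrt_dotProduct_inv_mulVec_le_sqrt_two_mul {n κ : Type*} [Fintype n] [DecidableEq n]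
    {lam : ℝ} (hlam : 0 < lam) {l : κ → κ → ℝ} (hl : ∀ k, 0 < l k k) {B : κ → Matrix n n ℝ}
    (hB : ∀ k, (B k).PosDef) (hBlow : ∀ k z, lam * l k k * (z ⬝ᵥ z) ≤ z ⬝ᵥ B k *ᵥ z)
    {s : Finset κ} {j : κ} (hsum : ∑ k ∈ s, l j k ^ 2 / (l j j * l k k) ≤ 1) (x : n → ℝ) :
    √(x ⬝ᵥ (B j)⁻¹ *ᵥ x) ≤
      √2 * √(x ⬝ᵥ (B j + lam ^ 2 • ∑ k ∈ s, l j k ^ 2 • (B k)⁻¹)⁻¹ *ᵥ x) := by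
  have hΓ : (B j + lam ^ 2 • ∑ k ∈ s, l j k ^ 2 • (B k)⁻¹).PosDef :=
    (hB j).add_posSemidef ((posSemidef_sum _ fun k _ =>
      (hB k).inv.posSemidef.smul (sq_nonneg (l j k))).smul (sq_nonneg lam))
  have hcoef : lam ^ 2 * ∑ k ∈ s, l j k ^ 2 / (lam * l k k) ≤ lam * l j j :=
    calc _ = lam * l j j * ∑ k ∈ s, l j k ^ 2 / (l j j * l k k) := by
          rw [mul_sum, mul_sum]
          refine sum_congr rfl fun k _ => ?_
          field_simp [(hl j).ne', (hl k).ne', hlam.ne']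
      _ ≤ lam * l j j := mul_le_of_le_one_right (mul_pos hlam (hl j)).le hsum
  refine hΓ.sqrt_dotProduct_inv_mulVec_le (hB j) two_pos
    (dotProduct_add_smul_sum_inv_mulVec_le (hBlow j) (fun k _ => hB k)
      (fun k _ => mul_pos hlam (hl k)) (fun k _ => hBlow k) (fun k _ => sq_nonneg (l j k))
      (sq_nonneg lam) hcoef) x

theorem stmt_8_general (d n : ℕ) (lam : ℝ) (hlam : 0 < lam)
    (l : Fin n → Fin n → ℝ) (hl : ∀ k, 0 < l k k)
    {ι : Type*} (T : Fin n → Finset ι)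
    (b bbar : Fin n → ι → Fin d → ℝ) (ν η : Fin n → ι → ℝ)
    (E : Fin n → ι → Matrix (Fin d) (Fin d) ℝ) (hE : ∀ k τ, (E k τ).PosSemidef)
    (μ : Fin n → Fin d → ℝ)
    (X : Fin n → ι → Fin d → ℝ) (hX : ∀ k τ, X k τ = b k τ - bbar k τ)
    (r : Fin n → ι → ℝ) (hr : ∀ k τ, r k τ = ν k τ + b k τ ⬝ᵥ μ k + η k τ)
    (B : Fin n → Matrix (Fin d) (Fin d) ℝ)
    (hB : ∀ k, B k = ∑ τ ∈ T k, (vecMulVec (X k τ) (X k τ) + E k τ) +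
      (lam * l k k) • (1 : Matrix (Fin d) (Fin d) ℝ))
    (mubar : Fin n → Fin d → ℝ)
    (hmubar : ∀ k, mubar k = (B k)⁻¹.mulVec (∑ τ ∈ T k, (2 * r k τ) • X k τ))
    (A : Fin n → Fin d → ℝ)
    (hA : ∀ k, A k = (∑ τ ∈ T k, (vecMulVec (X k τ) (X k τ) - E k τ)).mulVec (μ k) +
      ∑ τ ∈ T k, (2 * (ν k τ + bbar k τ ⬝ᵥ μ k)) • X k τ)
    (j : Fin n)
    (hsum : ∑ k ∈ Finset.univ.erase j, (l j k) ^ 2 / (l j j * l k k) ≤ 1)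
    (muhat : Fin d → ℝ)
    (hmuhat : muhat = mubar j -
      lam • (B j)⁻¹.mulVec (∑ k ∈ Finset.univ.erase j, l j k • mubar k))
    (Γ : Matrix (Fin d) (Fin d) ℝ)
    (hΓ : Γ = B j + lam ^ 2 • ∑ k ∈ Finset.univ.erase j, (l j k) ^ 2 • (B k)⁻¹)
    (C₁ C₂ C₃ C₄ C₅ C₆ : ℝ)
    (hC₁ : C₁ = Real.sqrt ((lam • ∑ k : Fin n, l j k • μ k) ⬝ᵥ
      (B j)⁻¹.mulVec (lam • ∑ k : Fin n, l j k • μ k)))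
    (hC₂ : C₂ = Real.sqrt
      ((lam ^ 2 • ∑ k ∈ Finset.univ.erase j, (l j k * l k k) • (B k)⁻¹.mulVec (μ k)) ⬝ᵥ
        (B j)⁻¹.mulVec
          (lam ^ 2 • ∑ k ∈ Finset.univ.erase j, (l j k * l k k) • (B k)⁻¹.mulVec (μ k))))
    (hC₃ : C₃ = Real.sqrt ((∑ τ ∈ T j, (2 * η j τ) • X j τ) ⬝ᵥ
      (B j)⁻¹.mulVec (∑ τ ∈ T j, (2 * η j τ) • X j τ)))
    (hC₄ : C₄ = Real.sqrt
      ((lam • ∑ k ∈ Finset.univ.erase j,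
          l j k • (B k)⁻¹.mulVec (∑ τ ∈ T k, (2 * η k τ) • X k τ)) ⬝ᵥ
        (B j)⁻¹.mulVec (lam • ∑ k ∈ Finset.univ.erase j,
          l j k • (B k)⁻¹.mulVec (∑ τ ∈ T k, (2 * η k τ) • X k τ))))
    (hC₅ : C₅ = Real.sqrt (A j ⬝ᵥ (B j)⁻¹.mulVec (A j)))
    (hC₆ : C₆ = Real.sqrt
      ((lam • ∑ k ∈ Finset.univ.erase j, l j k • (B k)⁻¹.mulVec (A k)) ⬝ᵥ
        (B j)⁻¹.mulVec (lam • ∑ k ∈ Finset.univ.erase j, l j k • (B k)⁻¹.mulVec (A k))))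
    (x : Fin d → ℝ) :
    |x ⬝ᵥ (muhat - μ j)| ≤
      Real.sqrt 2 * Real.sqrt (x ⬝ᵥ Γ⁻¹.mulVec x) * (C₁ + C₂ + C₃ + C₄ + C₅ + C₆) := by
  classical
  have hQ : ∀ k, (∑ τ ∈ T k, (vecMulVec (X k τ) (X k τ) + E k τ)).PosSemidef := fun k =>
    posSemidef_sum_vecMulVec_add (T k) (X k) (hE k)
  have hBpd : ∀ k, (B k).PosDef := fun k =>
    hB k ▸ PosDef.posSemidef_add (hQ k) (PosDef.one.smul (mul_pos hlam (hl k)))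
  have hBlow : ∀ k z, lam * l k k * (z ⬝ᵥ z) ≤ z ⬝ᵥ B k *ᵥ z := fun k z =>
    hB k ▸ (hQ k).mul_dotProduct_le_dotProduct_add_smul_one_mulVec _ z
  have hmubar_eq : ∀ k, mubar k = μ k + (B k)⁻¹ *ᵥ
      (A k + ∑ τ ∈ T k, (2 * η k τ) • X k τ - (lam * l k k) • μ k) := fun k => by
    simp only [hmubar k, hr, inv_mulVec_sum_smul_eq (T k) (hX k) (ν k) (η k) (E k) (μ k) (hB k)
      (hBpd k).det_pos.ne'.isUnit, hA k]
  rw [hmuhat, sub_smul_inv_mulVec_sum_sub_eq B lam l hmubar_eq j]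
  set w₁ := lam • ∑ k, l j k • μ k
  set w₂ := lam ^ 2 • ∑ k ∈ univ.erase j, (l j k * l k k) • (B k)⁻¹ *ᵥ μ k
  set w₃ := ∑ τ ∈ T j, (2 * η j τ) • X j τ
  set w₄ := lam • ∑ k ∈ univ.erase j, l j k • (B k)⁻¹ *ᵥ ∑ τ ∈ T k, (2 * η k τ) • X k τ
  set w₅ := A j
  set w₆ := lam • ∑ k ∈ univ.erase j, l j k • (B k)⁻¹ *ᵥ A k
  set W := w₅ + w₃ - w₁ + w₂ - w₄ - w₆
  have hP := (hBpd j).inv.posSemidef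
  have hW : √(W ⬝ᵥ (B j)⁻¹ *ᵥ W) ≤ C₁ + C₂ + C₃ + C₄ + C₅ + C₆ := by
    rw [hC₁, hC₂, hC₃, hC₄, hC₅, hC₆]
    linarith [hP.sqrt_dotProduct_mulVec_sub_le (w₅ + w₃ - w₁ + w₂ - w₄) w₆,
      hP.sqrt_dotProduct_mulVec_sub_le (w₅ + w₃ - w₁ + w₂) w₄,
      hP.sqrt_dotProduct_mulVec_add_le (w₅ + w₃ - w₁) w₂,
      hP.sqrt_dotProduct_mulVec_sub_le (w₅ + w₃) w₁, hP.sqrt_dotProduct_mulVec_add_le w₅ w₃]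
  calc _ ≤ √(x ⬝ᵥ (B j)⁻¹ *ᵥ x) * √(W ⬝ᵥ (B j)⁻¹ *ᵥ W) := hP.abs_dotProduct_mulVec_le x W
    _ ≤ _ := by
      refine mul_le_mul ?_ hW (Real.sqrt_nonneg _) (by positivity)
      exact hΓ ▸ sqrt_dotProduct_inv_mulVec_le_sqrt_two_mul hlam hl hBpd hBlow hsum x

/-- the bound `|xᵀ(μ̂_j − μ_j)| ≤ √2 ‖x‖_{Γ_j⁻¹} (C₁ + ⋯ + C₆)`. -/
theorem stmt_8 (d n : ℕ) (hd : 1 ≤ d) (hn : 1 ≤ n) (lam : ℝ) (hlam : 0 < lam)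
    (l : Fin n → Fin n → ℝ) (hl : ∀ k, 0 < l k k)
    {ι : Type*} (T : Fin n → Finset ι)
    (b bbar : Fin n → ι → Fin d → ℝ) (ν η : Fin n → ι → ℝ)
    (E : Fin n → ι → Matrix (Fin d) (Fin d) ℝ) (hE : ∀ k τ, (E k τ).PosSemidef)
    (μ : Fin n → Fin d → ℝ)
    (X : Fin n → ι → Fin d → ℝ) (hX : ∀ k τ, X k τ = b k τ - bbar k τ)
    (r : Fin n → ι → ℝ) (hr : ∀ k τ, r k τ = ν k τ + b k τ ⬝ᵥ μ k + η k τ)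
    (B : Fin n → Matrix (Fin d) (Fin d) ℝ)
    (hB : ∀ k, B k = ∑ τ ∈ T k, (vecMulVec (X k τ) (X k τ) + E k τ) +
      (lam * l k k) • (1 : Matrix (Fin d) (Fin d) ℝ))
    (mubar : Fin n → Fin d → ℝ)
    (hmubar : ∀ k, mubar k = (B k)⁻¹.mulVec (∑ τ ∈ T k, (2 * r k τ) • X k τ))
    (A : Fin n → Fin d → ℝ)
    (hA : ∀ k, A k = (∑ τ ∈ T k, (vecMulVec (X k τ) (X k τ) - E k τ)).mulVec (μ k) +
      ∑ τ ∈ T k, (2 * (ν k τ + bbar k τ ⬝ᵥ μ k)) • X k τ)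
    (j : Fin n)
    (hsum : ∑ k ∈ Finset.univ.erase j, (l j k) ^ 2 / (l j j * l k k) ≤ 1)
    (muhat : Fin d → ℝ)
    (hmuhat : muhat = mubar j -
      lam • (B j)⁻¹.mulVec (∑ k ∈ Finset.univ.erase j, l j k • mubar k))
    (Γ : Matrix (Fin d) (Fin d) ℝ)
    (hΓ : Γ = B j + lam ^ 2 • ∑ k ∈ Finset.univ.erase j, (l j k) ^ 2 • (B k)⁻¹)
    (C₁ C₂ C₃ C₄ C₅ C₆ : ℝ)
    (hC₁ : C₁ = Real.sqrt ((lam • ∑ k : Fin n, l j k • μ k) ⬝ᵥ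
      (B j)⁻¹.mulVec (lam • ∑ k : Fin n, l j k • μ k)))
    (hC₂ : C₂ = Real.sqrt
      ((lam ^ 2 • ∑ k ∈ Finset.univ.erase j, (l j k * l k k) • (B k)⁻¹.mulVec (μ k)) ⬝ᵥ
        (B j)⁻¹.mulVec
          (lam ^ 2 • ∑ k ∈ Finset.univ.erase j, (l j k * l k k) • (B k)⁻¹.mulVec (μ k))))
    (hC₃ : C₃ = Real.sqrt ((∑ τ ∈ T j, (2 * η j τ) • X j τ) ⬝ᵥ
      (B j)⁻¹.mulVec (∑ τ ∈ T j, (2 * η j τ) • X j τ)))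
    (hC₄ : C₄ = Real.sqrt
      ((lam • ∑ k ∈ Finset.univ.erase j,
          l j k • (B k)⁻¹.mulVec (∑ τ ∈ T k, (2 * η k τ) • X k τ)) ⬝ᵥ
        (B j)⁻¹.mulVec (lam • ∑ k ∈ Finset.univ.erase j,
          l j k • (B k)⁻¹.mulVec (∑ τ ∈ T k, (2 * η k τ) • X k τ))))
    (hC₅ : C₅ = Real.sqrt (A j ⬝ᵥ (B j)⁻¹.mulVec (A j)))
    (hC₆ : C₆ = Real.sqrt
      ((lam • ∑ k ∈ Finset.univ.erase j, l j k • (B k)⁻¹.mulVec (A k)) ⬝ᵥ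
        (B j)⁻¹.mulVec (lam • ∑ k ∈ Finset.univ.erase j, l j k • (B k)⁻¹.mulVec (A k))))
    (x : Fin d → ℝ) :
    |x ⬝ᵥ (muhat - μ j)| ≤
      Real.sqrt 2 * Real.sqrt (x ⬝ᵥ Γ⁻¹.mulVec x) * (C₁ + C₂ + C₃ + C₄ + C₅ + C₆) :=
  stmt_8_general d n lam hlam l hl T b bbar ν η E hE μ X hX r hr B hB mubar hmubar A hA j hsum muhat
    hmuhat Γ hΓ C₁ C₂ C₃ C₄ C₅ C₆ hC₁ hC₂ hC₃ hC₄ hC₅ hC₆ x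
end

section
/- Let d ≥ 1 and T ≥ 1 be integers and let λ > 0 be a real. Let X_1,…,X_T ∈ ℝ^d satisfy ‖X_t‖₂ ≤ 2 for all t, and let E_1,…,E_T ∈ ℝ^{d×d} be symmetric positive semidefinite matrices with trace(E_t) ≤ 4 for all t. Define B(1) = λ I_d and B(t+1) = B(t) + X_t X_tᵀ + E_t for t = 1,…,T, and s_t = ‖X_t‖_{B(t)^{-1}}. Then Σ_{t=1}^T s_t ≤ √( (4 d T / (λ log(1 + 4/λ))) · log(1 + 8T/(d λ)) ). -/
/-!
The determinant of the design matrix `B t` grows at least by the factor `1 + s_t²` at every step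
(matrix determinant lemma, plus monotonicity of `det` under adding a positive semidefinite
matrix), while AM-GM on the eigenvalues bounds `det (B T)` by `(trace (B T) / d) ^ d`, and the
trace grows linearly. Hence `Σ log (1 + s_t²) ≤ d log (1 + 8T/(dλ))`. Since `s_t² ≤ 4/λ`,
concavity of `log` gives `s_t² ≤ (4/λ) / log (1 + 4/λ) · log (1 + s_t²)`, and Cauchy-Schwarz
turns the resulting bound on `Σ s_t²` into one on `Σ s_t`.
-/

open Matrix Finset

theorem Real.mul_log_one_add_le {x M : ℝ} (hx : 0 ≤ x) (hxM : x ≤ M) :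
    x * Real.log (1 + M) ≤ M * Real.log (1 + x) := by
  obtain rfl | hM := (hx.trans hxM).eq_or_lt
  · simp [le_antisymm hxM hx]
  have h := strictConcaveOn_log_Ioi.concaveOn.2 (Set.mem_Ioi.2 one_pos)
    (Set.mem_Ioi.2 (by linarith : (0 : ℝ) < 1 + M))
    (sub_nonneg.2 ((div_le_one hM).2 hxM)) (div_nonneg hx hM.le) (sub_add_cancel 1 (x / M))
  have hpt : (1 - x / M) • (1 : ℝ) + (x / M) • (1 + M) = 1 + x := by
    simp only [smul_eq_mul]; field_simp; ring
  rw [hpt, smul_eq_mul, smul_eq_mul, Real.log_one, mul_zero, zero_add] at h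
  rw [div_mul_eq_mul_div, div_le_iff₀ hM] at h
  linarith

theorem Real.sum_le_div_log_one_add_mul_sum_log {ι : Type*} (s : Finset ι) {a : ι → ℝ}
    {M : ℝ} (hM : 0 < M) (ha : ∀ i ∈ s, 0 ≤ a i ∧ a i ≤ M) :
    ∑ i ∈ s, a i ≤ M / Real.log (1 + M) * ∑ i ∈ s, Real.log (1 + a i) := by
  have hL : 0 < Real.log (1 + M) := Real.log_pos (by linarith)
  rw [mul_sum]
  refine sum_le_sum fun i hi ↦ ?_
  rw [div_mul_eq_mul_div, le_div_iff₀ hL]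
  linarith [Real.mul_log_one_add_le (ha i hi).1 (ha i hi).2]

namespace Matrix

variable {n : Type*}

theorem posDef_of_posSemidef_sub_smul_one [DecidableEq n] {A : Matrix n n ℝ} {c : ℝ}
    (hc : 0 < c) (hA : (A - c • 1).PosSemidef) : A.PosDef := by
  simpa using PosDef.posSemidef_add hA (PosDef.one.smul hc)

variable [Fintype n]

theorem det_add_vecMulVec [DecidableEq n] {α : Type*} [CommRing α] {A : Matrix n n α}
    (hA : IsUnit A.det) (u v : n → α) :
    (A + vecMulVec u v).det = A.det * (1 + v ⬝ᵥ A⁻¹ *ᵥ u) := by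
  rw [vecMulVec_eq Unit, det_add_replicateCol_mul_replicateRow hA, Matrix.mul_assoc,
    ← replicateCol_mulVec, det_unique (n := Unit)]
  simp

theorem posSemidef_vecMulVec_self (x : n → ℝ) : (vecMulVec x x).PosSemidef := by
  simpa using posSemidef_vecMulVec_self_star x

theorem PosSemidef.dotProduct_mulVec_self_nonneg {A : Matrix n n ℝ} (hA : A.PosSemidef)
    (x : n → ℝ) : 0 ≤ x ⬝ᵥ A *ᵥ x := by
  simpa using hA.dotProduct_mulVec_nonneg x

variable [DecidableEq n]

theorem PosDef.det_le_det_add_vecMulVec_self {A : Matrix n n ℝ} (hA : A.PosDef) (x : n → ℝ) :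
    A.det ≤ (A + vecMulVec x x).det := by
  rw [det_add_vecMulVec hA.det_pos.ne'.isUnit]
  have := hA.inv.posSemidef.dotProduct_mulVec_self_nonneg x
  nlinarith [hA.det_pos]

theorem PosDef.det_le_det_add {A E : Matrix n n ℝ} (hA : A.PosDef) (hE : E.PosSemidef) :
    A.det ≤ (A + E).det := by
  -- `E` is a sum of rank-one terms `v vᵀ`, each multiplying `det` by `1 + vᵀ A⁻¹ v ≥ 1`.
  obtain ⟨m, v, rfl⟩ := posSemidef_iff_eq_sum_vecMulVec.mp hE
  simp only [star_trivial]
  induction (univ : Finset (Fin m)) using Finset.induction_on with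
  | empty => simp
  | insert i s hi ih =>
    rw [sum_insert hi, ← add_assoc, add_right_comm]
    have hpos := hA.add_posSemidef (posSemidef_sum s fun j _ ↦ posSemidef_vecMulVec_self (v j))
    exact ih.trans (hpos.det_le_det_add_vecMulVec_self _)

theorem PosSemidef.det_le_trace_div_card_pow [Nonempty n] {A : Matrix n n ℝ}
    (hA : A.PosSemidef) : A.det ≤ (A.trace / Fintype.card n) ^ Fintype.card n := by
  set μ := hA.1.eigenvalues
  have hμ : ∀ i, 0 ≤ μ i := hA.eigenvalues_nonneg
  have hcard : (0 : ℝ) < Fintype.card n := by exact_mod_cast Fintype.card_pos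
  have amgm := Real.geom_mean_le_arith_mean univ (fun _ ↦ 1) μ (by simp) (by simpa using hcard)
    fun i _ ↦ hμ i
  simp only [Real.rpow_one, one_mul, sum_const, card_univ, nsmul_eq_mul, mul_one] at amgm
  rw [hA.1.det_eq_prod_eigenvalues, hA.1.trace_eq_sum_eigenvalues]
  simp only [RCLike.ofReal_real_eq_id, id]
  calc ∏ i, μ i = ((∏ i, μ i) ^ (Fintype.card n : ℝ)⁻¹) ^ Fintype.card n := by
        rw [← Real.rpow_natCast, ← Real.rpow_mul (prod_nonneg fun i _ ↦ hμ i),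
          inv_mul_cancel₀ hcard.ne', Real.rpow_one]
    _ ≤ _ := pow_le_pow_left₀ (Real.rpow_nonneg (prod_nonneg fun i _ ↦ hμ i) _) amgm _

theorem dotProduct_inv_mulVec_le_of_posSemidef_sub {A : Matrix n n ℝ} {c : ℝ} (hc : 0 < c)
    (hA : (A - c • 1).PosSemidef) (x : n → ℝ) :
    x ⬝ᵥ A⁻¹ *ᵥ x ≤ (x ⬝ᵥ x) / c := by
  have hA' := posDef_of_posSemidef_sub_smul_one hc hA
  -- With `y = A⁻¹ x`: `c ‖y‖² ≤ yᵀ A y = xᵀ y`, and `0 ≤ ‖x - c y‖²`.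
  set y := A⁻¹ *ᵥ x
  have hAy : A *ᵥ y = x := by
    simp [y, mulVec_mulVec, mul_nonsing_inv _ hA'.det_pos.ne'.isUnit]
  have hlow : c * (y ⬝ᵥ y) ≤ y ⬝ᵥ x := by
    have := hA.dotProduct_mulVec_self_nonneg y
    rwa [sub_mulVec, hAy, dotProduct_sub, smul_mulVec, one_mulVec, dotProduct_smul, smul_eq_mul,
      sub_nonneg] at this
  have hsq : 0 ≤ (x - c • y) ⬝ᵥ (x - c • y) := dotProduct_self_star_nonneg _
  simp only [dotProduct_sub, sub_dotProduct, dotProduct_smul, smul_dotProduct, smul_eq_mul,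
    dotProduct_comm y x] at hsq hlow
  rw [le_div_iff₀ hc]
  nlinarith

def regularizedGram (lam : ℝ) (X : ℕ → n → ℝ) (E : ℕ → Matrix n n ℝ) :
    ℕ → Matrix n n ℝ
  | 0 => lam • 1
  | t + 1 => regularizedGram lam X E t + vecMulVec (X t) (X t) + E t

section RegularizedGram

variable {lam : ℝ} {X : ℕ → n → ℝ} {E : ℕ → Matrix n n ℝ}

theorem posSemidef_regularizedGram_sub_smul_one (hE : ∀ t, (E t).PosSemidef) (t : ℕ) :
    (regularizedGram lam X E t - lam • 1).PosSemidef := by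
  induction t with
  | zero => simpa [regularizedGram] using PosSemidef.zero
  | succ t ih =>
    rw [regularizedGram, add_assoc, add_sub_right_comm]
    exact ih.add ((posSemidef_vecMulVec_self _).add (hE t))

theorem posDef_regularizedGram (hlam : 0 < lam) (hE : ∀ t, (E t).PosSemidef) (t : ℕ) :
    (regularizedGram lam X E t).PosDef :=
  posDef_of_posSemidef_sub_smul_one hlam (posSemidef_regularizedGram_sub_smul_one hE t)

theorem trace_regularizedGram_le {K : ℝ} (hK : ∀ t, X t ⬝ᵥ X t + (E t).trace ≤ K)
    (T : ℕ) :
    (regularizedGram lam X E T).trace ≤ Fintype.card n * lam + T * K := by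
  induction T with
  | zero => simp [regularizedGram, mul_comm]
  | succ T ih =>
    rw [regularizedGram, trace_add, trace_add, trace_vecMulVec]
    push_cast
    linarith [hK T]

theorem pow_card_mul_prod_le_det_regularizedGram (hlam : 0 < lam)
    (hE : ∀ t, (E t).PosSemidef) (T : ℕ) :
    lam ^ Fintype.card n *
        ∏ t ∈ range T, (1 + X t ⬝ᵥ (regularizedGram lam X E t)⁻¹ *ᵥ X t) ≤
      (regularizedGram lam X E T).det := by
  induction T with
  | zero => simp [regularizedGram]
  | succ T ih =>
    have hB := posDef_regularizedGram (X := X) hlam hE T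
    have ha := hB.inv.posSemidef.dotProduct_mulVec_self_nonneg (X T)
    rw [prod_range_succ, ← mul_assoc, regularizedGram]
    calc _ ≤ (regularizedGram lam X E T).det *
          (1 + X T ⬝ᵥ (regularizedGram lam X E T)⁻¹ *ᵥ X T) := by gcongr
      _ = (regularizedGram lam X E T + vecMulVec (X T) (X T)).det :=
        (det_add_vecMulVec hB.det_pos.ne'.isUnit _ _).symm
      _ ≤ _ := (hB.add_posSemidef (posSemidef_vecMulVec_self _)).det_le_det_add (hE T)

theorem sum_log_one_add_le_of_trace_regularizedGram_le [Nonempty n] (hlam : 0 < lam)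
    (hE : ∀ t, (E t).PosSemidef) {T : ℕ} {c : ℝ}
    (hc : (regularizedGram lam X E T).trace ≤ c) :
    ∑ t ∈ range T, Real.log (1 + X t ⬝ᵥ (regularizedGram lam X E t)⁻¹ *ᵥ X t) ≤
      Fintype.card n * Real.log (c / (Fintype.card n * lam)) := by
  have ha : ∀ t, 0 < 1 + X t ⬝ᵥ (regularizedGram lam X E t)⁻¹ *ᵥ X t := fun t ↦ by
    have hB := posDef_regularizedGram (X := X) hlam hE t
    linarith [hB.inv.posSemidef.dotProduct_mulVec_self_nonneg (X t)]
  have hcard : (0 : ℝ) < Fintype.card n := by exact_mod_cast Fintype.card_pos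
  have hprod : ∏ t ∈ range T, (1 + X t ⬝ᵥ (regularizedGram lam X E t)⁻¹ *ᵥ X t) ≤
      (c / (Fintype.card n * lam)) ^ Fintype.card n := by
    rw [← div_div, div_pow, le_div_iff₀ (by positivity), mul_comm]
    calc _ ≤ (regularizedGram lam X E T).det := pow_card_mul_prod_le_det_regularizedGram hlam hE T
      _ ≤ ((regularizedGram lam X E T).trace / Fintype.card n) ^ Fintype.card n :=
        (posDef_regularizedGram hlam hE T).posSemidef.det_le_trace_div_card_pow
      _ ≤ (c / Fintype.card n) ^ Fintype.card n := by
        gcongr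
        exact div_nonneg (posDef_regularizedGram hlam hE T).posSemidef.trace_nonneg hcard.le
  rw [← Real.log_pow, ← Real.log_prod fun t _ ↦ (ha t).ne']
  exact Real.log_le_log (prod_pos fun t _ ↦ ha t) hprod

end RegularizedGram

end Matrix

theorem stmt_13_general (d T : ℕ) (hd : 1 ≤ d) (lam : ℝ) (hlam : 0 < lam)
    (X : ℕ → Fin d → ℝ) (hX : ∀ t, Real.sqrt (X t ⬝ᵥ X t) ≤ 2)
    (E : ℕ → Matrix (Fin d) (Fin d) ℝ) (hE : ∀ t, (E t).PosSemidef)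
    (htr : ∀ t, (E t).trace ≤ 4)
    (B : ℕ → Matrix (Fin d) (Fin d) ℝ)
    (hB0 : B 0 = lam • (1 : Matrix (Fin d) (Fin d) ℝ))
    (hBs : ∀ t, B (t + 1) = B t + vecMulVec (X t) (X t) + E t)
    (s : ℕ → ℝ) (hs : ∀ t, s t = Real.sqrt (X t ⬝ᵥ (B t)⁻¹.mulVec (X t))) :
    ∑ t ∈ Finset.range T, s t ≤
      Real.sqrt ((4 * d * T / (lam * Real.log (1 + 4 / lam))) *
        Real.log (1 + 8 * T / (d * lam))) := by
  have : Nonempty (Fin d) := ⟨⟨0, hd⟩⟩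
  obtain rfl : B = regularizedGram lam X E := funext fun t ↦ by
    induction t with
    | zero => exact hB0
    | succ t ih => rw [hBs, ih]; rfl
  have hX4 : ∀ t, X t ⬝ᵥ X t ≤ 4 := fun t ↦ by
    linarith [(Real.sqrt_le_left zero_le_two).mp (hX t)]
  have ha : ∀ t ∈ range T, 0 ≤ X t ⬝ᵥ (regularizedGram lam X E t)⁻¹ *ᵥ X t ∧
      X t ⬝ᵥ (regularizedGram lam X E t)⁻¹ *ᵥ X t ≤ 4 / lam := fun t _ ↦
    ⟨(posDef_regularizedGram hlam hE t).inv.posSemidef.dotProduct_mulVec_self_nonneg (X t),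
      (dotProduct_inv_mulVec_le_of_posSemidef_sub hlam
        (posSemidef_regularizedGram_sub_smul_one hE t) (X t)).trans (by gcongr; exact hX4 t)⟩
  have hlog := sum_log_one_add_le_of_trace_regularizedGram_le hlam hE
    (trace_regularizedGram_le (fun t ↦ add_le_add (hX4 t) (htr t)) T)
  rw [Fintype.card_fin, show (d * lam + T * (4 + 4)) / (d * lam) = 1 + 8 * T / (d * lam) by
    field_simp; ring] at hlog
  have hL : 0 < Real.log (1 + 4 / lam) := Real.log_pos (lt_add_of_pos_right 1 (by positivity))
  apply Real.le_sqrt_of_sq_le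
  calc (∑ t ∈ range T, s t) ^ 2 ≤ T * ∑ t ∈ range T, s t ^ 2 := by
        simpa using sq_sum_le_card_mul_sum_sq (s := range T) (f := s)
    _ = T * ∑ t ∈ range T, X t ⬝ᵥ (regularizedGram lam X E t)⁻¹ *ᵥ X t := by
        congr 1
        exact sum_congr rfl fun t ht ↦ by rw [hs, Real.sq_sqrt (ha t ht).1]
    _ ≤ T * (4 / lam / Real.log (1 + 4 / lam) * (d * Real.log (1 + 8 * T / (d * lam)))) := by
        gcongr
        exact (Real.sum_le_div_log_one_add_mul_sum_log _ (by positivity) ha).trans (by gcongr)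
    _ = _ := by ring

/-- deterministic elliptical-potential bound
`Σ_t s_t ≤ √( (4dT/(λ log(1+4/λ))) log(1 + 8T/(dλ)) )` (0-indexed recursion). -/
theorem stmt_13 (d T : ℕ) (hd : 1 ≤ d) (hT : 1 ≤ T) (lam : ℝ) (hlam : 0 < lam)
    (X : ℕ → Fin d → ℝ) (hX : ∀ t, Real.sqrt (X t ⬝ᵥ X t) ≤ 2)
    (E : ℕ → Matrix (Fin d) (Fin d) ℝ) (hE : ∀ t, (E t).PosSemidef)
    (htr : ∀ t, (E t).trace ≤ 4)
    (B : ℕ → Matrix (Fin d) (Fin d) ℝ)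
    (hB0 : B 0 = lam • (1 : Matrix (Fin d) (Fin d) ℝ))
    (hBs : ∀ t, B (t + 1) = B t + vecMulVec (X t) (X t) + E t)
    (s : ℕ → ℝ) (hs : ∀ t, s t = Real.sqrt (X t ⬝ᵥ (B t)⁻¹.mulVec (X t))) :
    ∑ t ∈ Finset.range T, s t ≤
      Real.sqrt ((4 * d * T / (lam * Real.log (1 + 4 / lam))) *
        Real.log (1 + 8 * T / (d * lam))) :=
  stmt_13_general d T hd lam hlam X hX E hE htr B hB0 hBs s hs
end
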